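/- arXiv:2108.04862 — 4 statements merged into one kernel-verified Lean document; each statement's English description precedes it below -/
import Mathlib

section
/- Let S be a finite multiset of positive integers and k ≥ 2. Suppose we have a complete bipartite graph with donors indexed by S (donor i having weight x_i on every edge) and k recipients, all with normalization score 1. Then there exists a nonempty matching (each donor matched to at most one recipient, at least one donor matched) in which every recipient receives the same total matched weight if and only if there exist k pairwise disjoint nonempty subsets S_1,...,S_k of S with equal sums. -/
open Finset Function

lemma Finset.nonempty_of_sum_eq_of_pos {ι M : Type*} [AddCommMonoid M] [PartialOrder M]
    [IsOrderedCancelAddMonoid M] {s t : Finset ι} {x : ι → M} (hx : ∀ i, 0 < x i)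
    (hst : ∑ i ∈ s, x i = ∑ i ∈ t, x i) (ht : t.Nonempty) : s.Nonempty :=
  nonempty_of_sum_ne_zero (hst ▸ (sum_pos (fun i _ => hx i) ht).ne')

section OptionFibres

variable {ι κ : Type*} [Fintype ι] [DecidableEq κ]

lemma disjoint_filter_eq_some (f : ι → Option κ) {r r' : κ} (h : r ≠ r') :
    Disjoint (univ.filter fun i => f i = some r) (univ.filter fun i => f i = some r') :=
  disjoint_filter.2 fun _ _ hr hr' => h (Option.some_injective _ (hr.symm.trans hr'))

lemma exists_filter_eq_some_eq_of_pairwise_disjoint {S : κ → Finset ι}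
    (hS : Pairwise (Disjoint on S)) :
    ∃ f : ι → Option κ, ∀ r, univ.filter (fun i => f i = some r) = S r := by
  classical
  refine ⟨fun i => if h : ∃ j, i ∈ S j then some h.choose else none, fun r => ?_⟩
  ext i
  simp only [mem_filter, mem_univ, true_and]
  split_ifs with h
  · refine ⟨fun hr => Option.some_injective _ hr ▸ h.choose_spec, fun hi => ?_⟩
    by_contra hne
    exact disjoint_left.1 (hS (mt (congrArg some) hne)) h.choose_spec hi
  · simpa using fun hi => h ⟨r, hi⟩

end OptionFibres

theorem stmt_0_general (ι : Type) [Fintype ι]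
    (x : ι → ℕ) (hx : ∀ i, 0 < x i) (k : ℕ) (hk : 2 ≤ k) :
    (∃ f : ι → Option (Fin k),
        (∃ i, f i ≠ none) ∧
        (∀ r r' : Fin k,
          ∑ i ∈ Finset.univ.filter (fun i => f i = some r), x i =
          ∑ i ∈ Finset.univ.filter (fun i => f i = some r'), x i)) ↔
    (∃ S : Fin k → Finset ι,
        (∀ j, (S j).Nonempty) ∧
        (∀ j j', j ≠ j' → Disjoint (S j) (S j')) ∧
        (∀ j j', ∑ i ∈ S j, x i = ∑ i ∈ S j', x i)) := by
  constructor
  · rintro ⟨f, ⟨i₀, hi₀⟩, hsum⟩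
    obtain ⟨r₀, hr₀⟩ := Option.ne_none_iff_exists'.mp hi₀
    refine ⟨fun r => univ.filter (fun i => f i = some r), fun r => ?_,
      fun _ _ => disjoint_filter_eq_some f, hsum⟩
    exact nonempty_of_sum_eq_of_pos hx (hsum r r₀) ⟨i₀, by simpa using hr₀⟩
  · rintro ⟨S, hne, hdis, hsum⟩
    obtain ⟨f, hf⟩ := exists_filter_eq_some_eq_of_pairwise_disjoint hdis
    obtain ⟨i₀, hi₀⟩ := hne ⟨0, by omega⟩
    rw [← hf, mem_filter] at hi₀
    exact ⟨f, ⟨i₀, by simp [hi₀.2]⟩, fun r r' => by simpa only [hf] using hsum r r'⟩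

/-- k-EQUAL-SUM-SUBSET reduction core: a nonempty matching of donors (with positive
integer weights `x`) to `k` recipients in which all recipients receive equal total
weight exists iff there are `k` pairwise disjoint nonempty subsets of equal sum. -/
theorem stmt_0 (ι : Type) [Fintype ι] [DecidableEq ι]
    (x : ι → ℕ) (hx : ∀ i, 0 < x i) (k : ℕ) (hk : 2 ≤ k) :
    (∃ f : ι → Option (Fin k),
        (∃ i, f i ≠ none) ∧
        (∀ r r' : Fin k,
          ∑ i ∈ Finset.univ.filter (fun i => f i = some r), x i =
          ∑ i ∈ Finset.univ.filter (fun i => f i = some r'), x i)) ↔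
    (∃ S : Fin k → Finset ι,
        (∀ j, (S j).Nonempty) ∧
        (∀ j j', j ≠ j' → Disjoint (S j) (S j')) ∧
        (∀ j j', ∑ i ∈ S j, x i = ∑ i ∈ S j', x i)) :=
  stmt_0_general ι x hx k hk
end

section
/- Fix γ ∈ (0,1) and positive integers x_1,...,x_N with total sum T. Consider a bipartite graph with donors 1,...,N+1 and recipients 1,2,3, all recipients having normalization score 1. Donors 1..N are adjacent to recipients 1 and 2 with edge weights x_i; donor N+1 is adjacent only to recipient 3 with edge weight T/(2γ). Then there exists a nonempty γ-proportional matching if and only if the multiset {x_1,...,x_N} can be partitioned into two subsets each of sum T/2. -/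
/-!
If donor `N+1` is unmatched then `Y₃ = 0`, and proportionality forces `Y₁ = Y₂ = 0`; since
all weights are positive, the matching is empty. If it is matched, `γ Y₃ = T/2` bounds `Y₁`
and `Y₂` from below by `T/2`, while they are sums over disjoint sets of donors of total weight
`T`; hence `Y₁ = T/2` and the donors matched to recipient 1 form one half of a partition.
Conversely, a partition `(A, Aᶜ)` gives `Y₁ = Y₂ = T/2 = γ Y₃ ≤ Y₃`, which is
`γ`-proportional as `γ < 1`.
-/

open Finset

section Fibers

variable {ι α M : Type*} [Fintype ι]
  [AddCommMonoid M] [PartialOrder M] [IsOrderedAddMonoid M]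

theorem sum_fiber_add_sum_fiber_le [DecidableEq α] {g : ι → α} {a b : α} (hab : a ≠ b)
    {w : ι → M} (hw : ∀ i, 0 ≤ w i) :
    ∑ i ∈ univ.filter (g · = a), w i + ∑ i ∈ univ.filter (g · = b), w i ≤
      ∑ i, w i := by
  classical
  rw [← sum_union (disjoint_filter.2 fun i _ ha hb => hab (ha.symm.trans hb))]
  exact sum_le_sum_of_subset_of_nonneg (subset_univ _) fun i _ _ => hw i

theorem eq_none_of_sum_fiber_nonpos [DecidableEq α] {g : ι → Option α} {w : ι → M}
    (hw : ∀ i, 0 < w i) (h : ∀ a, ∑ i ∈ univ.filter (g · = some a), w i ≤ 0) (i : ι) :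
    g i = none := by
  cases hgi : g i with
  | none => rfl
  | some a =>
    have hle := single_le_sum (fun j _ => (hw j).le)
      (s := univ.filter (g · = some a)) (a := i) (by simp [hgi])
    exact absurd (hle.trans (h a)) (hw i).not_ge

theorem filter_ite_mem_eq_left [DecidableEq ι] [DecidableEq α] (A : Finset ι) {a b : α}
    (hab : a ≠ b) : univ.filter (fun i => (if i ∈ A then a else b) = a) = A := by
  ext i; by_cases h : i ∈ A <;> simp [h, hab.symm]

theorem filter_ite_mem_eq_right [DecidableEq ι] [DecidableEq α] (A : Finset ι) {a b : α}
    (hab : a ≠ b) : univ.filter (fun i => (if i ∈ A then a else b) = b) = Aᶜ := by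
  ext i; by_cases h : i ∈ A <;> simp [h, hab]

end Fibers

/-- PARTITION reduction: a nonempty γ-proportional matching of the constructed graph
exists iff the integers x₁,…,x・N can be split into two parts of sum T/2. -/
theorem stmt_1 (γ : ℝ) (hγ0 : 0 < γ) (hγ1 : γ < 1)
    (N : ℕ) (x : Fin N → ℕ) (hx : ∀ i, 0 < x i)
    (T : ℕ) (hT : T = ∑ i, x i) :
    (∃ (g : Fin N → Option (Fin 2)) (b : Bool),
      ((∃ i, g i ≠ none) ∨ b = true) ∧
      (let Y1 : ℝ := ∑ i ∈ Finset.univ.filter (fun i => g i = some 0), (x i : ℝ)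
       let Y2 : ℝ := ∑ i ∈ Finset.univ.filter (fun i => g i = some 1), (x i : ℝ)
       let Y3 : ℝ := if b then (T : ℝ) / (2 * γ) else 0
       γ * Y1 ≤ Y2 ∧ γ * Y2 ≤ Y1 ∧ γ * Y1 ≤ Y3 ∧ γ * Y3 ≤ Y1 ∧
       γ * Y2 ≤ Y3 ∧ γ * Y3 ≤ Y2)) ↔
    (∃ A : Finset (Fin N), 2 * ∑ i ∈ A, x i = T) := by
  have hY3 : γ * ((T : ℝ) / (2 * γ)) = T / 2 := by field_simp
  have hTsum : ∑ i, (x i : ℝ) = T := by rw [hT]; push_cast; rfl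
  constructor
  · rintro ⟨g, b, hne, -, -, h13, h31, h23, h32⟩
    cases b with
    | false =>
      simp only [Bool.false_eq_true, ↓reduceIte, or_false] at hne h13 h23
      obtain ⟨i, hi⟩ := hne
      refine (hi (eq_none_of_sum_fiber_nonpos (w := fun i => (x i : ℝ))
        (fun i => Nat.cast_pos.2 (hx i)) ?_ i)).elim
      exact Fin.forall_fin_two.2
        ⟨nonpos_of_mul_nonpos_right h13 hγ0, nonpos_of_mul_nonpos_right h23 hγ0⟩
    | true =>
      simp only [↓reduceIte, hY3] at h31 h32
      have hsum := sum_fiber_add_sum_fiber_le (g := g) (a := some 0) (b := some 1)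
        (by simp) (fun i => (Nat.cast_nonneg (x i) : (0 : ℝ) ≤ x i))
      refine ⟨univ.filter (g · = some 0), ?_⟩
      have hhalf : 2 * ∑ i ∈ univ.filter (g · = some 0), (x i : ℝ) = T := by linarith
      exact_mod_cast hhalf
  · rintro ⟨A, hA⟩
    refine ⟨fun i => if i ∈ A then some 0 else some 1, true, Or.inr rfl, ?_⟩
    have h01 : (some 0 : Option (Fin 2)) ≠ some 1 := by simp
    have hA' : ∑ i ∈ A, (x i : ℝ) = T / 2 := by
      have : 2 * ∑ i ∈ A, (x i : ℝ) = T := by exact_mod_cast hA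
      linarith
    have hAc : ∑ i ∈ Aᶜ, (x i : ℝ) = T / 2 := by
      linarith [sum_add_sum_compl A fun i => (x i : ℝ)]
    have hY3le : (T : ℝ) / 2 ≤ T / (2 * γ) := by
      rw [← hY3]; exact mul_le_of_le_one_left (by positivity) hγ1.le
    have hγhalf : γ * ((T : ℝ) / 2) ≤ T / 2 := mul_le_of_le_one_left (by positivity) hγ1.le
    simp only [filter_ite_mem_eq_left A h01, filter_ite_mem_eq_right A h01, hA', hAc,
      ↓reduceIte, hY3]
    exact ⟨hγhalf, hγhalf, hγhalf.trans hY3le, le_rfl, hγhalf.trans hY3le, le_rfl⟩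
end

section
/- In any nonempty γ-proportional matching of the partition-reduction graph (donors 1..N with weights x_i adjacent to recipients 1 and 2, donor N+1 adjacent only to recipient 3 with weight T/(2γ), where T = Σ x_i and γ ∈ (0,1)), recipient 3 must be matched, and consequently recipients 1 and 2 each receive matched weight exactly T/2. -/
/-! Recipients 1 and 2 share the donors `1..N`, so `Y₁ + Y₂ ≤ T`. If recipient 3 were unmatched,
proportionality against `Y₃ = 0` would force `Y₁ = Y₂ = 0`, impossible for a nonempty matching with
positive weights. Once recipient 3 is matched, `γ Y₃ = T / 2` is a lower bound for both `Y₁` and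
`Y₂`, and together with `Y₁ + Y₂ ≤ T` this pins both to `T / 2`. -/

open Finset

section MatchedWeight

variable {ι κ M : Type*} [Fintype ι] [DecidableEq κ] [AddCommMonoid M] [PartialOrder M]

def matchedWeight (g : ι → Option κ) (w : ι → M) (j : κ) : M :=
  ∑ i ∈ univ.filter (fun i => g i = some j), w i

variable (g : ι → Option κ) {w : ι → M}

theorem matchedWeight_nonneg [IsOrderedAddMonoid M] (hw : ∀ i, 0 ≤ w i) (j : κ) :
    0 ≤ matchedWeight g w j :=
  sum_nonneg fun i _ => hw i

theorem matchedWeight_add_le_sum [IsOrderedAddMonoid M] (hw : ∀ i, 0 ≤ w i) {j j' : κ}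
    (hjj' : j ≠ j') : matchedWeight g w j + matchedWeight g w j' ≤ ∑ i, w i := by
  have hdisj : Disjoint (univ.filter fun i => g i = some j) (univ.filter fun i => g i = some j') :=
    disjoint_filter.mpr fun i _ hi hi' => hjj' (Option.some_injective _ (hi.symm.trans hi'))
  rw [matchedWeight, matchedWeight, ← sum_disjUnion hdisj]
  exact sum_le_univ_sum_of_nonneg hw

theorem exists_matchedWeight_pos [IsOrderedCancelAddMonoid M] (hw : ∀ i, 0 < w i)
    (hg : ∃ i, g i ≠ none) : ∃ j, 0 < matchedWeight g w j := by
  obtain ⟨i, hi⟩ := hg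
  obtain ⟨j, hj⟩ := Option.ne_none_iff_exists'.mp hi
  exact ⟨j, sum_pos (fun i _ => hw i) ⟨i, mem_filter.mpr ⟨mem_univ i, hj⟩⟩⟩

end MatchedWeight

theorem stmt_2_general (γ : ℝ) (hγ0 : 0 < γ)
    (N : ℕ) (x : Fin N → ℕ) (hx : ∀ i, 0 < x i)
    (T : ℕ) (hT : T = ∑ i, x i)
    (g : Fin N → Option (Fin 2)) (b : Bool)
    (Y1 Y2 Y3 : ℝ)
    (hY1 : Y1 = ∑ i ∈ Finset.univ.filter (fun i => g i = some 0), (x i : ℝ))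
    (hY2 : Y2 = ∑ i ∈ Finset.univ.filter (fun i => g i = some 1), (x i : ℝ))
    (hY3 : Y3 = if b then (T : ℝ) / (2 * γ) else 0)
    (hnonempty : (∃ i, g i ≠ none) ∨ b = true)
    (hprop : γ * Y1 ≤ Y2 ∧ γ * Y2 ≤ Y1 ∧ γ * Y1 ≤ Y3 ∧ γ * Y3 ≤ Y1 ∧
             γ * Y2 ≤ Y3 ∧ γ * Y3 ≤ Y2) :
    b = true ∧ Y1 = (T : ℝ) / 2 ∧ Y2 = (T : ℝ) / 2 := by
  obtain ⟨-, -, h13, h31, h23, h32⟩ := hprop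
  have hw : ∀ i, (0 : ℝ) < x i := fun i => Nat.cast_pos.mpr (hx i)
  have hb : b = true := by
    by_contra hb
    simp only [hb, if_false] at hY3
    obtain hpos | hpos := Fin.exists_fin_two.mp
      (exists_matchedWeight_pos g hw (hnonempty.resolve_right hb))
    · exact (mul_pos hγ0 (hY1 ▸ hpos)).not_ge (hY3 ▸ h13)
    · exact (mul_pos hγ0 (hY2 ▸ hpos)).not_ge (hY3 ▸ h23)
  have hγY3 : γ * Y3 = T / 2 := by
    rw [hY3, if_pos hb]
    field_simp
  have hsum : Y1 + Y2 ≤ T := by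
    rw [hY1, hY2, hT, Nat.cast_sum]
    exact matchedWeight_add_le_sum g (fun i => (hw i).le) (by decide : (0 : Fin 2) ≠ 1)
  exact ⟨hb, by linarith, by linarith⟩

/-- In any nonempty γ-proportional matching of the partition-reduction graph,
recipient 3 is matched, and recipients 1 and 2 each receive exactly T/2. -/
theorem stmt_2 (γ : ℝ) (hγ0 : 0 < γ) (hγ1 : γ < 1)
    (N : ℕ) (x : Fin N → ℕ) (hx : ∀ i, 0 < x i)
    (T : ℕ) (hT : T = ∑ i, x i)
    (g : Fin N → Option (Fin 2)) (b : Bool)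
    (Y1 Y2 Y3 : ℝ)
    (hY1 : Y1 = ∑ i ∈ Finset.univ.filter (fun i => g i = some 0), (x i : ℝ))
    (hY2 : Y2 = ∑ i ∈ Finset.univ.filter (fun i => g i = some 1), (x i : ℝ))
    (hY3 : Y3 = if b then (T : ℝ) / (2 * γ) else 0)
    (hnonempty : (∃ i, g i ≠ none) ∨ b = true)
    (hprop : γ * Y1 ≤ Y2 ∧ γ * Y2 ≤ Y1 ∧ γ * Y1 ≤ Y3 ∧ γ * Y3 ≤ Y1 ∧
             γ * Y2 ≤ Y3 ∧ γ * Y3 ≤ Y2) :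
    b = true ∧ Y1 = (T : ℝ) / 2 ∧ Y2 = (T : ℝ) / 2 :=
  stmt_2_general γ hγ0 N x hx T hT g b Y1 Y2 Y3 hY1 hY2 hY3 hnonempty hprop
end

section
/- The optimal value of the non-adaptive-policy LP (Problem for NAdapOpt(γ)) is at least (1/D) times the optimal value of the original LP relaxation: if x* is feasible for the original LP (with x*_{e,t} ≤ p_{v,t}·a_{u,t} and Σ_{e ∋ u} x*_{e,t} ≤ a_{u,t}), then ȳ_{e,t} := (1/D)·x*_{e,t}/p_{v,t} is feasible for the non-adaptive LP (satisfying Σ_{e ∋ u} ȳ_{e,t} ≤ a_{u,t}, ȳ_{e,t} ∈ [0,1], and the same γ-proportionality constraints), and its objective Σ_t Σ_e w_{e,t}·ȳ_{e,t}·p_{v,t} equals (1/D)·Σ_t Σ_e w_{e,t}·x*_{e,t}. -/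
/-! Dividing by `p` turns the edge bound `x e t ≤ p e t * a u t` into `ȳ e t ≤ a u t / D`, so the
at most `D` edges at a donor contribute at most `a u t` in total. Moreover `ȳ * p = x / D`, so every
quantity that is linear in `ȳ * p` (the objective and both sides of each proportionality
constraint) is the corresponding quantity for `x` scaled by the nonnegative factor `1 / D`. -/

open Finset

lemma one_div_mul_div_le_div {x p a D : ℝ} (hp : 0 < p) (hD : 0 < D) (hxp : x ≤ p * a) :
    1 / D * (x / p) ≤ a / D := by
  rw [one_div_mul_eq_div]
  exact div_le_div_of_nonneg_right ((div_le_iff₀' hp).2 hxp) hD.le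

lemma sum_le_of_card_le_of_forall_le_div {ι : Type*} {s : Finset ι} {f : ι → ℝ} {c : ℝ} {D : ℕ}
    (hc : 0 ≤ c) (hs : #s ≤ D) (hf : ∀ i ∈ s, f i ≤ c / D) : ∑ i ∈ s, f i ≤ c := by
  calc ∑ i ∈ s, f i ≤ #s • (c / D) := sum_le_card_nsmul _ _ _ hf
    _ ≤ D * (c / D) := by rw [nsmul_eq_mul]; gcongr
    _ ≤ c := by
      rcases eq_or_ne D 0 with rfl | hD
      · simpa using hc
      · rw [mul_div_cancel₀ _ (by exact_mod_cast hD)]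

lemma sum_sum_mul_eq_mul_of_mul_eq {E T : Type*} [Fintype T] (s : Finset E)
    {y p x w : E → T → ℝ} {c : ℝ} (h : ∀ e t, y e t * p e t = c * x e t) :
    ∑ t, ∑ e ∈ s, y e t * p e t * w e t = c * ∑ t, ∑ e ∈ s, x e t * w e t := by
  simp_rw [h, mul_sum, mul_assoc]

lemma mul_mul_mul_le_of_le {γ α β S S' c : ℝ} (hc : 0 ≤ c) (h : γ * (α * S) ≤ β * S') :
    γ * (α * (c * S)) ≤ β * (c * S') :=
  calc γ * (α * (c * S)) = c * (γ * (α * S)) := by ring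
    _ ≤ c * (β * S') := mul_le_mul_of_nonneg_left h hc
    _ = β * (c * S') := by ring

theorem stmt_12_general (E U V T : Type) [Fintype E] [Fintype T]
    [DecidableEq U] [DecidableEq V]
    (donor : E → U) (recip : E → V)
    (x p w : E → T → ℝ) (a : U → T → ℝ)
    (ha01 : ∀ u t, a u t = 0 ∨ a u t = 1)
    (hp0 : ∀ e t, 0 < p e t)
    (hx0 : ∀ e t, 0 ≤ x e t)
    (hxp : ∀ e t, x e t ≤ p e t * a (donor e) t)
    (D : ℕ) (hD : 1 ≤ D)
    (hdeg : ∀ u, (Finset.univ.filter (fun e : E => donor e = u)).card ≤ D)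
    (γ : ℝ) (m : V → ℝ)
    (hprop : ∀ v v' : V, v ≠ v' →
      γ * ((1 / m v) * ∑ t, ∑ e ∈ Finset.univ.filter (fun e => recip e = v),
        x e t * w e t) ≤
      (1 / m v') * ∑ t, ∑ e ∈ Finset.univ.filter (fun e => recip e = v'),
        x e t * w e t)
    (ybar : E → T → ℝ)
    (hybar : ∀ e t, ybar e t = (1 / (D : ℝ)) * (x e t / p e t)) :
    -- bounds
    (∀ e t, 0 ≤ ybar e t ∧ ybar e t ≤ 1) ∧
    -- donor constraints
    (∀ u t, ∑ e ∈ Finset.univ.filter (fun e => donor e = u), ybar e t ≤ a u t) ∧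
    -- proportionality preserved
    (∀ v v' : V, v ≠ v' →
      γ * ((1 / m v) * ∑ t, ∑ e ∈ Finset.univ.filter (fun e => recip e = v),
        ybar e t * p e t * w e t) ≤
      (1 / m v') * ∑ t, ∑ e ∈ Finset.univ.filter (fun e => recip e = v'),
        ybar e t * p e t * w e t) ∧
    -- objective scales by 1/D
    (∑ t : T, ∑ e : E, w e t * ybar e t * p e t) =
      (1 / (D : ℝ)) * ∑ t : T, ∑ e : E, w e t * x e t := by
  have hD0 : (0 : ℝ) < D := by exact_mod_cast hD
  have ha : ∀ u t, 0 ≤ a u t ∧ a u t ≤ 1 := fun u t => by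
    rcases ha01 u t with h | h <;> simp [h]
  have hy_le : ∀ e t, ybar e t ≤ a (donor e) t / D := fun e t =>
    hybar e t ▸ one_div_mul_div_le_div (hp0 e t) hD0 (hxp e t)
  have hyp : ∀ e t, ybar e t * p e t = 1 / D * x e t := fun e t => by
    rw [hybar]; field_simp [(hp0 e t).ne']
  refine ⟨fun e t => ⟨?_, ?_⟩, fun u t => ?_, fun v v' hvv' => ?_, ?_⟩
  · rw [hybar]
    exact mul_nonneg (by positivity) (div_nonneg (hx0 e t) (hp0 e t).le)
  · exact (hy_le e t).trans (div_le_one_of_le₀ ((ha _ _).2.trans (by exact_mod_cast hD)) hD0.le)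
  · exact sum_le_of_card_le_of_forall_le_div (ha u t).1 (hdeg u)
      fun e he => (mem_filter.1 he).2 ▸ hy_le e t
  · rw [sum_sum_mul_eq_mul_of_mul_eq _ hyp, sum_sum_mul_eq_mul_of_mul_eq _ hyp]
    exact mul_mul_mul_le_of_le (by positivity) (hprop v v' hvv')
  · simp_rw [mul_assoc, hyp, mul_sum, mul_left_comm (w _ _)]

/-- Scaling an original-LP feasible solution x* by ȳ = (1/D)·x*/p yields a feasible
solution of the non-adaptive LP (bounds, donor constraints, γ-proportionality all
preserved) with objective exactly (1/D) times the original objective. -/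
theorem stmt_12 (E U V T : Type) [Fintype E] [Fintype U] [Fintype V] [Fintype T]
    [DecidableEq U] [DecidableEq V]
    (donor : E → U) (recip : E → V)
    (x p w : E → T → ℝ) (a : U → T → ℝ)
    (ha01 : ∀ u t, a u t = 0 ∨ a u t = 1)
    (hp0 : ∀ e t, 0 < p e t) (hp1 : ∀ e t, p e t ≤ 1)
    (hx0 : ∀ e t, 0 ≤ x e t)
    (hxp : ∀ e t, x e t ≤ p e t * a (donor e) t)
    (hsum : ∀ u t, ∑ e ∈ Finset.univ.filter (fun e => donor e = u), x e t ≤ a u t)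
    (D : ℕ) (hD : 1 ≤ D)
    (hdeg : ∀ u, (Finset.univ.filter (fun e : E => donor e = u)).card ≤ D)
    (γ : ℝ) (m : V → ℝ) (hm : ∀ v, 0 < m v)
    (hprop : ∀ v v' : V, v ≠ v' →
      γ * ((1 / m v) * ∑ t, ∑ e ∈ Finset.univ.filter (fun e => recip e = v),
        x e t * w e t) ≤
      (1 / m v') * ∑ t, ∑ e ∈ Finset.univ.filter (fun e => recip e = v'),
        x e t * w e t)
    (ybar : E → T → ℝ)
    (hybar : ∀ e t, ybar e t = (1 / (D : ℝ)) * (x e t / p e t)) :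
    -- bounds
    (∀ e t, 0 ≤ ybar e t ∧ ybar e t ≤ 1) ∧
    -- donor constraints
    (∀ u t, ∑ e ∈ Finset.univ.filter (fun e => donor e = u), ybar e t ≤ a u t) ∧
    -- proportionality preserved
    (∀ v v' : V, v ≠ v' →
      γ * ((1 / m v) * ∑ t, ∑ e ∈ Finset.univ.filter (fun e => recip e = v),
        ybar e t * p e t * w e t) ≤
      (1 / m v') * ∑ t, ∑ e ∈ Finset.univ.filter (fun e => recip e = v'),
        ybar e t * p e t * w e t) ∧
    -- objective scales by 1/D
    (∑ t : T, ∑ e : E, w e t * ybar e t * p e t) =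
      (1 / (D : ℝ)) * ∑ t : T, ∑ e : E, w e t * x e t :=
  stmt_12_general E U V T donor recip x p w a ha01 hp0 hx0 hxp D hD hdeg γ m hprop ybar hybar
end
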